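/- arXiv:2605.28915 — 9 statements merged into one kernel-verified Lean document; each statement's English description precedes it below -/
import Mathlib

section
/- If the edge set of a graph G can be partitioned into at most k complete bipartite graphs, then χ(G) ≤ 2^k. -/
/-- The edge set of the complete bipartite graph with parts `A` and `B`. -/
def bicliqueEdges {V : Type*} (A B : Set V) : Set (Sym2 V) :=
  {e | ∃ a ∈ A, ∃ b ∈ B, e = s(a, b)}

/-- `G`'s edge set can be partitioned into at most `k` complete bipartite graphs. -/
def HasBicliquePartition {V : Type*} (G : SimpleGraph V) (k : ℕ) : Prop :=
  ∃ A B : Fin k → Set V,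
    (∀ i, Disjoint (A i) (B i)) ∧
    (Set.univ : Set (Fin k)).PairwiseDisjoint (fun i => bicliqueEdges (A i) (B i)) ∧
    (⋃ i, bicliqueEdges (A i) (B i)) = G.edgeSet

/-- If the edge set of `G` can be partitioned into at most `k` complete bipartite
graphs, then `χ(G) ≤ 2 ^ k`. -/
theorem stmt_1 {V : Type*} [Fintype V] (G : SimpleGraph V) (k : ℕ)
    (h : HasBicliquePartition G k) :
    G.chromaticNumber ≤ ((2 ^ k : ℕ) : ℕ∞) := by
  classical
  obtain ⟨A, B, hdisj, _, hUnion⟩ := h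
  let C : G.Coloring (Fin k → Bool) := SimpleGraph.Coloring.mk
    (fun v i => decide (v ∈ A i)) (by
      intro u v hadj hne
      have he : s(u, v) ∈ ⋃ i, bicliqueEdges (A i) (B i) := by
        rw [hUnion]; exact hadj
      obtain ⟨s, ⟨i, rfl⟩, hs⟩ := he
      obtain ⟨a, ha, b, hb, hab⟩ := hs
      rw [Sym2.eq_iff] at hab
      have hmem : u ∈ A i ∧ v ∈ B i ∨ v ∈ A i ∧ u ∈ B i := by
        rcases hab with ⟨rfl, rfl⟩ | ⟨rfl, rfl⟩
        · exact Or.inl ⟨ha, hb⟩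
        · exact Or.inr ⟨ha, hb⟩
      have heq : decide (u ∈ A i) = decide (v ∈ A i) := congrFun hne i
      rw [decide_eq_decide] at heq
      rcases hmem with ⟨hu, hv⟩ | ⟨hv, hu⟩
      · exact (hdisj i).ne_of_mem (heq.mp hu) hv rfl
      · exact (hdisj i).ne_of_mem (heq.mpr hv) hu rfl)
  have hcol : G.Colorable (2 ^ k) := by
    have := C.colorable
    simpa using this.mono (by simp)
  have := hcol.chromaticNumber_le
  exact_mod_cast this
end

section
/- Let G be a graph whose edge set is partitioned into edge-disjoint complete bipartite graphs H and H', where H has parts A, B and H' has parts A', B'. Then H' cannot have both an edge with both endpoints in A and an edge with both endpoints in B. -/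
/-- If the complete bipartite graphs `H` (with parts `A, B`) and `H'` (with parts
`A', B'`) are edge-disjoint subgraphs of `G`, then `H'` cannot have both an edge with
both endpoints in `A` and an edge with both endpoints in `B`. -/
theorem stmt_2 {V : Type*} (G : SimpleGraph V) (A B A' B' : Set V)
    (hAB : Disjoint A B) (hA'B' : Disjoint A' B')
    (hHsub : bicliqueEdges A B ⊆ G.edgeSet)
    (hH'sub : bicliqueEdges A' B' ⊆ G.edgeSet)
    (hdisj : Disjoint (bicliqueEdges A B) (bicliqueEdges A' B')) :
    ¬ ((∃ x ∈ A', ∃ y ∈ B', x ∈ A ∧ y ∈ A) ∧ (∃ x ∈ A', ∃ y ∈ B', x ∈ B ∧ y ∈ B)) := by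
  rintro ⟨⟨x, hxA', y, hyB', hxA, hyA⟩, ⟨u, huA', v, hvB', huB, hvB⟩⟩
  exact Set.disjoint_left.mp hdisj ⟨x, hxA, v, hvB, rfl⟩ ⟨x, hxA', v, hvB', rfl⟩
end

section
/- Let G be a graph whose edge set is partitioned into edge-disjoint complete bipartite graphs H_i (with parts A_i, B_i) and H_j (with parts A_j, B_j). If H_i has an edge with both endpoints contained in some part of H_j, then H_j has no edge with both endpoints contained in a part of H_i. -/
/-- The complete bipartite graph with parts `A`, `B` has an edge with both
endpoints in the set `S`. -/
def HasEdgeInside {V : Type*} (A B S : Set V) : Prop :=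
  ∃ x ∈ A, ∃ y ∈ B, x ∈ S ∧ y ∈ S

/-- If the edge-disjoint complete bipartite subgraphs `H_i` (parts `Ai, Bi`) and
`H_j` (parts `Aj, Bj`) of `G` are such that `H_i` has an edge with both endpoints in
a part of `H_j`, then `H_j` has no edge with both endpoints in a part of `H_i`. -/
theorem stmt_3 {V : Type*} (G : SimpleGraph V) (Ai Bi Aj Bj : Set V)
    (hi : Disjoint Ai Bi) (hj : Disjoint Aj Bj)
    (hisub : bicliqueEdges Ai Bi ⊆ G.edgeSet)
    (hjsub : bicliqueEdges Aj Bj ⊆ G.edgeSet)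
    (hdisj : Disjoint (bicliqueEdges Ai Bi) (bicliqueEdges Aj Bj))
    (h : HasEdgeInside Ai Bi Aj ∨ HasEdgeInside Ai Bi Bj) :
    ¬ (HasEdgeInside Aj Bj Ai ∨ HasEdgeInside Aj Bj Bi) := by
  rintro (⟨u, hu, v, hv, hu', hv'⟩ | ⟨u, hu, v, hv, hu', hv'⟩) <;>
    rcases h with ⟨x, hx, y, hy, hx', hy'⟩ | ⟨x, hx, y, hy, hx', hy'⟩
  · exact Set.disjoint_left.mp hdisj ⟨v, hv', y, hy, rfl⟩ ⟨y, hy', v, hv, Sym2.eq_swap⟩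
  · exact Set.disjoint_left.mp hdisj ⟨u, hu', y, hy, rfl⟩ ⟨u, hu, y, hy', rfl⟩
  · exact Set.disjoint_left.mp hdisj ⟨x, hx, v, hv', rfl⟩ ⟨x, hx', v, hv, rfl⟩
  · exact Set.disjoint_left.mp hdisj ⟨x, hx, u, hu', rfl⟩ ⟨u, hu, x, hx', Sym2.eq_swap⟩
end

section
/- Let f(k) denote the maximum chromatic number of a graph whose edge set can be partitioned into at most k complete bipartite graphs (with f(0)=1). Then f(k+1) ≤ f(k) + f(⌊k/2⌋) for all k ≥ 0. -/
/-- `f k` is the maximum chromatic number of a (finite) graph whose edge set can be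
partitioned into at most `k` complete bipartite graphs. -/
noncomputable def f (k : ℕ) : ℕ :=
  sSup {n : ℕ | ∃ (V : Type) (_ : Fintype V) (G : SimpleGraph V),
    HasBicliquePartition G k ∧ G.chromaticNumber = (n : ℕ∞)}

/-!
Let the last biclique of a partition into `k + 1` bicliques be `(S, T)`. Every edge of it has an
end in `S`, so `G - S` keeps a partition into the other `k` bicliques and is `f k`-colourable.
No other biclique can have edges inside both `S` and `T`: an end in `S` of one and an end in `T`
of the other would span an edge lying in that biclique and in `(S, T)`. Hence one of `S`, `T`,
say `S`, meets at most `⌊k/2⌋` of them internally, so `G[S]` is `f ⌊k/2⌋`-colourable, and the two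
colourings with disjoint palettes colour `G`.
-/

open SimpleGraph Function

section BicliquePartition

variable {V ι : Type*} {G : SimpleGraph V} {A B : ι → Set V}

@[simp]
lemma mk_mem_bicliqueEdges {A B : Set V} {u v : V} :
    s(u, v) ∈ bicliqueEdges A B ↔ u ∈ A ∧ v ∈ B ∨ u ∈ B ∧ v ∈ A := by
  simp only [bicliqueEdges]
  aesop

lemma bicliqueEdges_preimage {W : Type*} (g : W → V) (A B : Set V) :
    bicliqueEdges (g ⁻¹' A) (g ⁻¹' B) = Sym2.map g ⁻¹' bicliqueEdges A B := by
  ext e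
  induction e using Sym2.ind
  simp

lemma bicliqueEdges_empty_left (B : Set V) : bicliqueEdges ∅ B = ∅ := by
  simp [bicliqueEdges]

structure IsBicliquePartition (G : SimpleGraph V) (A B : ι → Set V) : Prop where
  disjoint : ∀ i, Disjoint (A i) (B i)
  pairwise_disjoint : Pairwise (Disjoint on fun i => bicliqueEdges (A i) (B i))
  iUnion_eq : ⋃ i, bicliqueEdges (A i) (B i) = G.edgeSet

lemma hasBicliquePartition_iff {k : ℕ} :
    HasBicliquePartition G k ↔ ∃ A B : Fin k → Set V, IsBicliquePartition G A B := by
  simp only [HasBicliquePartition, Set.PairwiseDisjoint, Set.pairwise_univ]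
  exact ⟨fun ⟨A, B, h₁, h₂, h₃⟩ => ⟨A, B, h₁, h₂, h₃⟩, fun ⟨A, B, h₁, h₂, h₃⟩ => ⟨A, B, h₁, h₂, h₃⟩⟩

lemma IsBicliquePartition.adj_iff (h : IsBicliquePartition G A B) {u v : V} :
    G.Adj u v ↔ ∃ i, s(u, v) ∈ bicliqueEdges (A i) (B i) := by
  rw [← mem_edgeSet, ← h.iUnion_eq, Set.mem_iUnion]

lemma isBicliquePartition_bot [IsEmpty ι] (A B : ι → Set V) :
    IsBicliquePartition (⊥ : SimpleGraph V) A B where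
  disjoint := isEmptyElim
  pairwise_disjoint := isEmptyElim
  iUnion_eq := by simp

lemma IsBicliquePartition.hasBicliquePartition [Finite ι] (h : IsBicliquePartition G A B)
    {n : ℕ} (hn : Nat.card ι ≤ n) : HasBicliquePartition G n := by
  cases nonempty_fintype ι
  obtain ⟨g⟩ : Nonempty (ι ↪ Fin n) :=
    Function.Embedding.nonempty_of_card_le (by rwa [Fintype.card_fin, ← Nat.card_eq_fintype_card])
  have edges_extend : ∀ j, bicliqueEdges (extend g A ⊥ j) (extend g B ⊥ j) =
      extend g (fun i => bicliqueEdges (A i) (B i)) ⊥ j := by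
    intro j
    by_cases hj : ∃ i, g i = j
    · obtain ⟨i, rfl⟩ := hj
      simp only [g.injective.extend_apply]
    · simp [extend_apply' _ _ _ hj, bicliqueEdges_empty_left]
  refine hasBicliquePartition_iff.2 ⟨extend g A ⊥, extend g B ⊥, ⟨fun j => ?_, ?_, ?_⟩⟩
  · by_cases hj : ∃ i, g i = j
    · obtain ⟨i, rfl⟩ := hj
      simpa only [g.injective.extend_apply] using h.disjoint i
    · simp [extend_apply' _ _ _ hj]
  · intro j₁ j₂ hne
    simp only [onFun, edges_extend]
    by_cases hj₁ : ∃ i, g i = j₁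
    · by_cases hj₂ : ∃ i, g i = j₂
      · obtain ⟨i₁, rfl⟩ := hj₁
        obtain ⟨i₂, rfl⟩ := hj₂
        simpa only [g.injective.extend_apply] using h.pairwise_disjoint (ne_of_apply_ne g hne)
      · simp [extend_apply' _ _ _ hj₂]
    · simp [extend_apply' _ _ _ hj₁]
  · simp only [edges_extend, ← Set.iSup_eq_iUnion, iSup_extend_bot g.injective]
    exact h.iUnion_eq

def bicliquesWithin (A B : ι → Set V) (X : Set V) : Set ι :=
  {i | (A i ∩ X).Nonempty ∧ (B i ∩ X).Nonempty}

lemma notMem_bicliquesWithin_of_disjoint {X : Set V} {i : ι}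
    (h : Disjoint (A i) X ∨ Disjoint (B i) X) : i ∉ bicliquesWithin A B X := by
  rintro ⟨hA, hB⟩
  rcases h with h | h
  exacts [hA.not_disjoint h, hB.not_disjoint h]

lemma IsBicliquePartition.induce (h : IsBicliquePartition G A B) (X : Set V) :
    IsBicliquePartition (G.induce X) (fun i : bicliquesWithin A B X => (↑) ⁻¹' A i)
      (fun i => (↑) ⁻¹' B i) where
  disjoint i := (h.disjoint i).preimage _
  pairwise_disjoint i j hne := by
    simpa only [onFun, bicliqueEdges_preimage] using
      (h.pairwise_disjoint (Subtype.coe_ne_coe.2 hne)).preimage _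
  iUnion_eq := by
    ext e
    induction e using Sym2.ind with
    | _ u v =>
    simp only [Set.mem_iUnion, mem_edgeSet, comap_adj, Embedding.coe_subtype, h.adj_iff,
      bicliqueEdges_preimage, Set.mem_preimage, Sym2.map_mk]
    refine ⟨fun ⟨i, hi⟩ => ⟨i, hi⟩, fun ⟨i, hi⟩ => ⟨⟨i, ?_⟩, hi⟩⟩
    rcases mk_mem_bicliqueEdges.1 hi with ⟨hu, hv⟩ | ⟨hu, hv⟩
    exacts [⟨⟨u, hu, u.2⟩, ⟨v, hv, v.2⟩⟩, ⟨⟨v, hv, v.2⟩, ⟨u, hu, u.2⟩⟩]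

lemma IsBicliquePartition.hasBicliquePartition_induce [Finite ι] (h : IsBicliquePartition G A B)
    (X : Set V) {n : ℕ} (hn : (bicliquesWithin A B X).ncard ≤ n) :
    HasBicliquePartition (G.induce X) n :=
  (h.induce X).hasBicliquePartition (by rwa [Nat.card_coe_set_eq])

/-- An edge of the `i`-th biclique with one end in `A i₀` and the other in `B i₀` would also
belong to the `i₀`-th biclique. -/
lemma IsBicliquePartition.disjoint_bicliquesWithin (h : IsBicliquePartition G A B) (i₀ : ι) :
    Disjoint (bicliquesWithin A B (A i₀)) (bicliquesWithin A B (B i₀)) := by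
  refine Set.disjoint_left.2 fun i ⟨⟨a, ha, ha₀⟩, hB⟩ ⟨_, ⟨b, hb, hb₀⟩⟩ => ?_
  by_cases hi : i = i₀
  · subst hi
    obtain ⟨c, hc, hc₀⟩ := hB
    exact Set.disjoint_left.1 (h.disjoint i) hc₀ hc
  · exact Set.disjoint_left.1 (h.pairwise_disjoint hi)
      (mk_mem_bicliqueEdges.2 (.inl ⟨ha, hb⟩)) (mk_mem_bicliqueEdges.2 (.inl ⟨ha₀, hb₀⟩))

lemma HasBicliquePartition.colorable {k : ℕ} (h : HasBicliquePartition G k) :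
    G.Colorable (3 ^ k) := by
  classical
  obtain ⟨A, B, h⟩ := hasBicliquePartition_iff.1 h
  let C : G.Coloring (Fin k → Fin 3) :=
    Coloring.mk (fun v i => if v ∈ A i then 0 else if v ∈ B i then 1 else 2) fun {u v} huv heq => by
      obtain ⟨i, hi⟩ := h.adj_iff.1 huv
      have hBA := Set.disjoint_right.1 (h.disjoint i)
      have := congrFun heq i
      rcases mk_mem_bicliqueEdges.1 hi with ⟨hu, hv⟩ | ⟨hu, hv⟩
      · simp [hu, hv, hBA hv] at this
      · simp [hu, hv, hBA hu] at this
  simpa using C.colorable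

end BicliquePartition

lemma colorable_add_of_induce {V : Type*} {G : SimpleGraph V} (S : Set V) {a b : ℕ}
    (hS : (G.induce S).Colorable a) (hSc : (G.induce Sᶜ).Colorable b) :
    G.Colorable (a + b) := by
  classical
  obtain ⟨C₁⟩ := hS
  obtain ⟨C₂⟩ := hSc
  let C : G.Coloring (Fin a ⊕ Fin b) :=
    Coloring.mk (fun v => if hv : v ∈ S then .inl (C₁ ⟨v, hv⟩) else .inr (C₂ ⟨v, hv⟩))
      fun {u v} huv heq => by
        by_cases hu : u ∈ S <;> by_cases hv : v ∈ S <;> simp only [hu, hv, dite_true,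
          dite_false, Sum.inl.injEq, Sum.inr.injEq, reduceCtorEq] at heq
        · exact C₁.valid (show (G.induce S).Adj ⟨u, hu⟩ ⟨v, hv⟩ from huv) heq
        · exact C₂.valid (show (G.induce Sᶜ).Adj ⟨u, hu⟩ ⟨v, hv⟩ from huv) heq
  simpa using C.colorable

lemma HasBicliquePartition.colorable_f {V : Type} [Finite V] {G : SimpleGraph V} {k : ℕ}
    (h : HasBicliquePartition G k) : G.Colorable (f k) := by
  have hbdd : BddAbove {n : ℕ | ∃ (V : Type) (_ : Fintype V) (G : SimpleGraph V),
      HasBicliquePartition G k ∧ G.chromaticNumber = (n : ℕ∞)} := by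
    refine ⟨3 ^ k, ?_⟩
    rintro n ⟨W, _, H, hH, hn⟩
    exact_mod_cast hn ▸ hH.colorable.chromaticNumber_le
  have hfin : G.chromaticNumber ≠ ⊤ :=
    chromaticNumber_ne_top_iff_exists.2 ⟨_, G.colorable_chromaticNumber_of_fintype⟩
  exact G.colorable_chromaticNumber_of_fintype.mono <|
    le_csSup hbdd ⟨V, Fintype.ofFinite V, G, h, (ENat.natCast_toNat hfin).symm⟩

lemma f_le_of_forall_colorable {k n : ℕ}
    (h : ∀ (V : Type) [Finite V] (G : SimpleGraph V), HasBicliquePartition G k → G.Colorable n) :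
    f k ≤ n := by
  have hbot : HasBicliquePartition (⊥ : SimpleGraph Empty) k :=
    (isBicliquePartition_bot (ι := Empty) isEmptyElim isEmptyElim).hasBicliquePartition (by simp)
  refine csSup_le ⟨0, Empty, inferInstance, ⊥, hbot, chromaticNumber_eq_zero_of_isEmpty⟩ ?_
  rintro m ⟨V, _, G, hG, hm⟩
  exact_mod_cast hm ▸ (h V G hG).chromaticNumber_le

lemma IsBicliquePartition.colorable_add {V ι : Type} [Finite V] [Finite ι] {G : SimpleGraph V}
    {A B : ι → Set V} (h : IsBicliquePartition G A B) {k : ℕ} (hι : Nat.card ι = k + 1) :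
    G.Colorable (f k + f (k / 2)) := by
  obtain ⟨i₀⟩ : Nonempty ι := Nat.card_pos_iff.1 (by omega) |>.1
  have hwithin : ∀ J : Set ι, i₀ ∉ J → J.ncard ≤ k := by
    intro J hJ
    calc J.ncard ≤ ({i₀}ᶜ : Set ι).ncard := Set.ncard_le_ncard (Set.subset_compl_singleton_iff.2 hJ)
      _ = k := by rw [Set.ncard_compl, Set.ncard_singleton, hι, Nat.add_sub_cancel]
  have hsplit : ∀ X, A i₀ ⊆ X ∨ B i₀ ⊆ X → ∀ m,
      (bicliquesWithin A B X).ncard ≤ m → G.Colorable (f k + f m) := by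
    intro X hX m hm
    have hXc : i₀ ∉ bicliquesWithin A B Xᶜ := notMem_bicliquesWithin_of_disjoint <|
      hX.imp Set.disjoint_compl_right_iff_subset.2 Set.disjoint_compl_right_iff_subset.2
    have hX' := (h.hasBicliquePartition_induce X hm).colorable_f
    rw [← compl_compl X] at hX'
    exact colorable_add_of_induce Xᶜ
      (h.hasBicliquePartition_induce Xᶜ (hwithin _ hXc)).colorable_f hX'
  have hsum : (bicliquesWithin A B (A i₀)).ncard + (bicliquesWithin A B (B i₀)).ncard ≤ k := by
    rw [← Set.ncard_union_eq (h.disjoint_bicliquesWithin i₀)]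
    refine hwithin _ ?_
    rintro (hi₀ | hi₀)
    exacts [notMem_bicliquesWithin_of_disjoint (.inr (h.disjoint i₀).symm) hi₀,
      notMem_bicliquesWithin_of_disjoint (.inl (h.disjoint i₀)) hi₀]
  rcases le_or_gt (bicliquesWithin A B (A i₀)).ncard (k / 2) with hA | hA
  · exact hsplit _ (.inl subset_rfl) _ hA
  · exact hsplit _ (.inr subset_rfl) _ (by omega)

/-- The recursive bound `f(k+1) ≤ f(k) + f(⌊k/2⌋)`. -/
theorem stmt_6 (k : ℕ) : f (k + 1) ≤ f k + f (k / 2) := by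
  refine f_le_of_forall_colorable fun V _ G hG => ?_
  obtain ⟨A, B, h⟩ := hasBicliquePartition_iff.1 hG
  exact h.colorable_add (by simp)
end

section
/- Let f : ℕ → ℕ be monotone nondecreasing with f(0) = 1, f(1) = 2, f(2) ≤ 3, f(3) ≤ 4, and f(k+1) ≤ f(k) + f(⌊k/4⌋) for all k. Then f(k) ≤ k · f(⌊k/4⌋) for all k ≥ 4. -/
/-- If `f` is monotone nondecreasing with `f(0)=1`, `f(1)=2`, `f(2) ≤ 3`, `f(3) ≤ 4`
and satisfies `f(k+1) ≤ f(k) + f(⌊k/4⌋)`, then `f(k) ≤ k * f(⌊k/4⌋)` for `k ≥ 4`. -/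
theorem stmt_8 (f : ℕ → ℕ) (hmono : Monotone f) (h0 : f 0 = 1) (h1 : f 1 = 2)
    (h2 : f 2 ≤ 3) (h3 : f 3 ≤ 4) (hrec : ∀ k, f (k + 1) ≤ f k + f (k / 4)) :
    ∀ k, 4 ≤ k → f k ≤ k * f (k / 4) := by
  intro k hk
  induction k with
  | zero => omega
  | succ n ih =>
    rcases Nat.lt_or_ge n 4 with h | h
    · have hn : n = 3 := by omega
      subst hn
      have := hrec 3
      norm_num at this ⊢
      omega
    · have hA := ih h
      have hB := hrec n
      have hC : f (n / 4) ≤ f ((n + 1) / 4) := hmono (by omega)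
      calc f (n + 1) ≤ f n + f (n / 4) := hB
        _ ≤ n * f (n / 4) + f (n / 4) := by omega
        _ = (n + 1) * f (n / 4) := by ring
        _ ≤ (n + 1) * f ((n + 1) / 4) := Nat.mul_le_mul_left _ hC
end

section
/- Let f : ℕ → ℕ satisfy f(1) ≤ 2, f(2) ≤ 3, f(3) ≤ 4, and f(k) ≤ k · f(⌊k/4⌋) for all k ≥ 4. Then f(k) ≤ 2^{(log₂(4k))²/4} for all k ≥ 1. -/
lemma logb24 : Real.logb 2 4 = 2 := by
  rw [show (4:ℝ) = 2^(2:ℕ) by norm_num, Real.logb_pow]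
  simp [Real.logb_self_eq_one]

lemma exp_ge {L : ℝ} (h : 3 ≤ L) : (2:ℝ) ≤ L^2/4 := by nlinarith

lemma rpow_mono2 {a b : ℝ} (h : a ≤ b) : (2:ℝ) ^ a ≤ 2 ^ b :=
  Real.rpow_le_rpow_left_iff (by norm_num) |>.mpr h

/-- If `f(1) ≤ 2`, `f(2) ≤ 3`, `f(3) ≤ 4` and `f(k) ≤ k * f(⌊k/4⌋)` for `k ≥ 4`,
then `f(k) ≤ 2 ^ ((log₂ (4k))² / 4)` for all `k ≥ 1`. -/
theorem stmt_9 (f : ℕ → ℕ) (h1 : f 1 ≤ 2) (h2 : f 2 ≤ 3) (h3 : f 3 ≤ 4)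
    (hrec : ∀ k, 4 ≤ k → f k ≤ k * f (k / 4)) :
    ∀ k : ℕ, 1 ≤ k → (f k : ℝ) ≤ 2 ^ ((Real.logb 2 (4 * k)) ^ 2 / 4) := by
  intro k
  induction k using Nat.strong_induction_on with
  | _ k ih =>
    intro hk
    rcases lt_or_ge k 4 with h4 | h4
    · interval_cases k
      · -- k = 1
        have : Real.logb 2 (4 * (1:ℕ)) = 2 := by norm_num [logb24]
        rw [this]
        calc (f 1 : ℝ) ≤ 2 := by exact_mod_cast h1
          _ = 2 ^ (1:ℝ) := by rw [Real.rpow_one]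
          _ ≤ 2 ^ ((2:ℝ)^2/4) := rpow_mono2 (by norm_num)
      · -- k = 2
        have hl : (3:ℝ) ≤ Real.logb 2 (4 * (2:ℕ)) := by
          rw [show (4:ℝ) * ((2:ℕ):ℝ) = 2^(3:ℕ) by push_cast; norm_num, Real.logb_pow]
          simp [Real.logb_self_eq_one]
        calc (f 2 : ℝ) ≤ 3 := by exact_mod_cast h2
          _ ≤ 2 ^ (2:ℝ) := by rw [show (2:ℝ)^(2:ℝ) = 2^(2:ℕ) by rw [← Real.rpow_natCast]; norm_num]; norm_num
          _ ≤ 2 ^ ((Real.logb 2 (4 * (2:ℕ)))^2/4) := rpow_mono2 (exp_ge hl)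
      · -- k = 3
        have hl : (3:ℝ) ≤ Real.logb 2 (4 * (3:ℕ)) := by
          have : Real.logb 2 ((2:ℝ)^(3:ℕ)) ≤ Real.logb 2 (4 * (3:ℕ)) := by
            apply Real.logb_le_logb_of_le (by norm_num : (1:ℝ) < 2) (by norm_num)
            push_cast; norm_num
          simpa [Real.logb_pow, Real.logb_self_eq_one] using this
        calc (f 3 : ℝ) ≤ 4 := by exact_mod_cast h3
          _ = 2 ^ (2:ℝ) := by rw [show (2:ℝ)^(2:ℝ) = 2^(2:ℕ) by rw [← Real.rpow_natCast]; norm_num]; norm_num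
          _ ≤ 2 ^ ((Real.logb 2 (4 * (3:ℕ)))^2/4) := rpow_mono2 (exp_ge hl)
    · -- inductive step, k ≥ 4
      set m := k / 4 with hm
      have hm1 : 1 ≤ m := by omega
      have hmk : m < k := by omega
      have ihm := ih m hmk hm1
      have h4m : (4 * m : ℝ) ≤ (k : ℝ) := by
        have : 4 * m ≤ k := by omega
        exact_mod_cast this
      have hkpos : (0:ℝ) < k := by positivity
      have hm1' : (1:ℝ) ≤ (m:ℝ) := by exact_mod_cast hm1
      have hlog1 : Real.logb 2 (4 * m) ≤ Real.logb 2 k := by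
        apply Real.logb_le_logb_of_le (by norm_num : (1:ℝ) < 2) (by positivity)
        push_cast; linarith
      have hlognn : (0:ℝ) ≤ Real.logb 2 (4 * m) := by
        apply Real.logb_nonneg (by norm_num)
        push_cast
        have : (1:ℝ) ≤ m := by exact_mod_cast hm1
        linarith
      have hsq : (Real.logb 2 (4 * m))^2 ≤ (Real.logb 2 k)^2 := by nlinarith
      set x := Real.logb 2 (k:ℝ) with hxdef
      have hx : (2:ℝ)^x = k := Real.rpow_logb (by norm_num) (by norm_num) hkpos
      have hlog4k : Real.logb 2 (4 * (k:ℝ)) = 2 + x := by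
        rw [Real.logb_mul (by norm_num) (by positivity), logb24]
      calc (f k : ℝ) ≤ (k : ℝ) * f m := by exact_mod_cast hrec k h4
        _ ≤ (k : ℝ) * 2 ^ ((Real.logb 2 (4 * m))^2/4) := by
            apply mul_le_mul_of_nonneg_left _ (le_of_lt hkpos)
            exact_mod_cast ihm
        _ ≤ (k : ℝ) * 2 ^ (x^2/4) := by
            apply mul_le_mul_of_nonneg_left (rpow_mono2 (by linarith)) (le_of_lt hkpos)
        _ ≤ 2 ^ ((Real.logb 2 (4 * k))^2/4) := by
            rw [hlog4k, show (2+x)^2/4 = x^2/4 + (x+1) by ring,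
              Real.rpow_add (by norm_num),
              show (2:ℝ)^(x+1) = 2*k by rw [Real.rpow_add (by norm_num), hx, Real.rpow_one]; ring]
            have hp : (0:ℝ) ≤ 2 ^ (x^2/4) := by positivity
            nlinarith
end

section
/- Let f : ℕ → ℕ be monotone with f(0)=1, f(1)≤2, f(2)≤3, f(3)≤4, and f(k+1) ≤ f(k) + f(⌊k/2⌋) for all k. Then f(k) ≤ 2^{((log₂ k)² + log₂ k)/2 + C} for all k ≥ 1, for some absolute constant C (e.g., C = 2). -/
/-- There is an absolute constant `C` such that: if `f` is monotone with `f(0)=1`,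
`f(1) ≤ 2`, `f(2) ≤ 3`, `f(3) ≤ 4` and `f(k+1) ≤ f(k) + f(⌊k/2⌋)` for all `k`, then
`f(k) ≤ 2 ^ (((log₂ k)² + log₂ k)/2 + C)` for all `k ≥ 1`. -/
theorem stmt_10 :
    ∃ C : ℝ, ∀ f : ℕ → ℕ, Monotone f → f 0 = 1 → f 1 ≤ 2 → f 2 ≤ 3 → f 3 ≤ 4 →
      (∀ k, f (k + 1) ≤ f k + f (k / 2)) →
      ∀ k : ℕ, 1 ≤ k →
        (f k : ℝ) ≤ 2 ^ (((Real.logb 2 k) ^ 2 + Real.logb 2 k) / 2 + C) := by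
  use 4
  intro f hf h0 h1 h2 h3 hrec k hk
  -- Step 1: f k ≤ (k+1) * f (k/2)
  have lemA : ∀ k, f k ≤ (k + 1) * f (k / 2) := by
    intro k
    induction k with
    | zero => simp [h0]
    | succ n ihn =>
      calc f (n + 1) ≤ f n + f (n / 2) := hrec n
        _ ≤ (n + 1) * f (n / 2) + f (n / 2) := Nat.add_le_add_right ihn _
        _ = (n + 2) * f (n / 2) := by ring
        _ ≤ (n + 1 + 1) * f ((n + 1) / 2) :=
            Nat.mul_le_mul_left _ (hf (Nat.div_le_div_right (Nat.le_succ n)))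
  -- Step 2: strong bound with slack
  have key : ∀ k : ℕ, 1 ≤ k → (f k : ℝ) ≤
      2 ^ (((Real.logb 2 k) ^ 2 + Real.logb 2 k) / 2 + 4 - 2 / (k : ℝ)) := by
    intro k
    induction k using Nat.strong_induction_on with
    | _ k ih =>
      intro hk
      rcases eq_or_lt_of_le hk with h1' | h2'
      · -- k = 1
        subst h1'
        simp only [Nat.cast_one, Real.logb_one]
        norm_num
        exact_mod_cast h1.trans (by norm_num)
      · -- 2 ≤ k
        have hk2 : 2 ≤ k := h2'
        set m := k / 2 with hm
        have hm1 : 1 ≤ m := (Nat.one_le_div_iff (by norm_num)).2 hk2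
        have hmk : m < k := Nat.div_lt_self (by omega) (by norm_num)
        have ihm := ih m hmk hm1
        have hkR : (2:ℝ) ≤ (k:ℝ) := by exact_mod_cast hk2
        have hkpos : (0:ℝ) < (k:ℝ) := by linarith
        have hmpos : (0:ℝ) < (m:ℝ) := by exact_mod_cast hm1
        set L := Real.logb 2 (k:ℝ) with hL
        set L' := Real.logb 2 (m:ℝ) with hL'
        have hL0 : 0 ≤ L := Real.logb_nonneg (by norm_num) (by exact_mod_cast hk)
        have hL'0 : 0 ≤ L' := Real.logb_nonneg (by norm_num) (by exact_mod_cast hm1)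
        have hmhalf : (m:ℝ) ≤ (k:ℝ) / 2 := by
          have h := Nat.div_mul_le_self k 2
          have : ((k / 2 * 2 : ℕ) : ℝ) ≤ (k:ℝ) := by exact_mod_cast h
          push_cast at this
          linarith
        have hL'le : L' ≤ L - 1 := by
          have h1 : L' ≤ Real.logb 2 ((k:ℝ) / 2) :=
            Real.logb_le_logb_of_le (by norm_num) hmpos hmhalf
          have h2 : Real.logb 2 ((k:ℝ) / 2) = L - 1 := by
            rw [Real.logb_div (by positivity) (by norm_num), Real.logb_self_eq_one] <;> norm_num
          linarith
        -- log2(k+1) ≤ L + 2/k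
        have hlog2pos : (0:ℝ) < Real.log 2 := Real.log_pos (by norm_num)
        have hlog2half : (1:ℝ)/2 ≤ Real.log 2 := by
          have := Real.log_two_gt_d9; linarith
        have hlogk1 : Real.logb 2 ((k:ℝ) + 1) ≤ L + 2 / (k:ℝ) := by
          have hsplit : Real.logb 2 ((k:ℝ) + 1) = L + Real.logb 2 (1 + 1/(k:ℝ)) := by
            rw [hL, ← Real.logb_mul (by positivity) (by positivity)]
            congr 1
            field_simp
          have hloglin : Real.log (1 + 1/(k:ℝ)) ≤ 1/(k:ℝ) := by
            have := Real.log_le_sub_one_of_pos (x := 1 + 1/(k:ℝ)) (by positivity)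
            linarith
          have hsmall : Real.logb 2 (1 + 1/(k:ℝ)) ≤ 2/(k:ℝ) := by
            rw [Real.logb, div_le_iff₀ hlog2pos]
            have h' : 2/(k:ℝ) * (1/2) = 1/(k:ℝ) := by ring
            have h'' := mul_le_mul_of_nonneg_left hlog2half
              (le_of_lt (by positivity : (0:ℝ) < 2/(k:ℝ)))
            linarith
          linarith [hsplit.le, hsplit.ge]
        have hmK : 2/(k:ℝ) + 2/(k:ℝ) ≤ 2/(m:ℝ) := by
          rw [show 2/(k:ℝ) + 2/(k:ℝ) = 4/(k:ℝ) by ring, div_le_div_iff₀ hkpos hmpos]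
          nlinarith
        have hsq : (L'^2 + L')/2 ≤ (L^2 + L)/2 - L := by
          nlinarith [sq_nonneg (L - 1 - L')]
        have hstart : (f k : ℝ) ≤ ((k:ℝ) + 1) * (f m : ℝ) := by exact_mod_cast lemA k
        clear_value m L L'
        calc (f k : ℝ) ≤ ((k:ℝ) + 1) * (f m : ℝ) := hstart
          _ ≤ ((k:ℝ) + 1) * 2 ^ ((L'^2 + L')/2 + 4 - 2/(m:ℝ)) := by gcongr
          _ = 2 ^ (Real.logb 2 ((k:ℝ)+1)) * 2 ^ ((L'^2 + L')/2 + 4 - 2/(m:ℝ)) := by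
              rw [Real.rpow_logb (by norm_num) (by norm_num) (by positivity)]
          _ = 2 ^ (Real.logb 2 ((k:ℝ)+1) + ((L'^2 + L')/2 + 4 - 2/(m:ℝ))) :=
              (Real.rpow_add (by norm_num) _ _).symm
          _ ≤ 2 ^ ((L^2 + L)/2 + 4 - 2/(k:ℝ)) := by
              apply Real.rpow_le_rpow_of_exponent_le (by norm_num)
              linarith
  -- conclude with C = 4
  have := key k hk
  have hkpos : (0:ℝ) < (k:ℝ) := by exact_mod_cast hk
  calc (f k : ℝ) ≤ 2 ^ (((Real.logb 2 k) ^ 2 + Real.logb 2 k) / 2 + 4 - 2/(k:ℝ)) := this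
    _ ≤ 2 ^ (((Real.logb 2 k) ^ 2 + Real.logb 2 k) / 2 + 4) := by
        apply Real.rpow_le_rpow_of_exponent_le (by norm_num)
        have : (0:ℝ) < 2/(k:ℝ) := by positivity
        linarith
end

section
/- Let G be a graph whose edge set is partitioned into k+1 edge-disjoint complete bipartite graphs H_1, ..., H_{k+1} with parts A_i, B_i. Then there exists an index j such that at most k/2 of the other indices i satisfy: H_i has an edge with both endpoints in A_j or both endpoints in B_j. -/
/-- If `E(G)` is partitioned into `k+1` complete bipartite graphs `H i` with parts
`A i`, `B i`, then there is an index `j` such that at most `k/2` of the other indices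
`i` satisfy: `H i` has an edge with both endpoints in `A j` or both endpoints in `B j`. -/
theorem stmt_13 {V : Type*} [Fintype V] (G : SimpleGraph V) (k : ℕ)
    (A B : Fin (k + 1) → Set V)
    (hdisj : ∀ i, Disjoint (A i) (B i))
    (hpair : (Set.univ : Set (Fin (k + 1))).PairwiseDisjoint
      (fun i => bicliqueEdges (A i) (B i)))
    (hcover : (⋃ i, bicliqueEdges (A i) (B i)) = G.edgeSet) :
    ∃ j : Fin (k + 1),
      2 * {i : Fin (k + 1) | i ≠ j ∧
        (HasEdgeInside (A i) (B i) (A j) ∨ HasEdgeInside (A i) (B i) (B j))}.ncard ≤ k := by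
  classical
  by_contra hcon
  push_neg at hcon
  set R : Fin (k+1) → Fin (k+1) → Prop := fun i j => i ≠ j ∧
    (HasEdgeInside (A i) (B i) (A j) ∨ HasEdgeInside (A i) (B i) (B j)) with hR
  have antisym : ∀ i j, R i j → R j i → False := by
    rintro i j ⟨hij, hi⟩ ⟨-, hj⟩
    have hd : Disjoint (bicliqueEdges (A i) (B i)) (bicliqueEdges (A j) (B j)) :=
      hpair (Set.mem_univ i) (Set.mem_univ j) hij
    obtain ⟨a, ha, b, hb, haj, hbj⟩ | ⟨a, ha, b, hb, haj, hbj⟩ := hi <;>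
      obtain ⟨c, hc, d, hd', hci, hdi⟩ | ⟨c, hc, d, hd', hci, hdi⟩ := hj
    · exact Set.disjoint_left.mp hd ⟨d, hdi, b, hb, rfl⟩ ⟨b, hbj, d, hd', Sym2.eq_swap⟩
    · exact Set.disjoint_left.mp hd ⟨a, ha, d, hdi, rfl⟩ ⟨a, haj, d, hd', rfl⟩
    · exact Set.disjoint_left.mp hd ⟨c, hci, b, hb, rfl⟩ ⟨c, hc, b, hbj, rfl⟩
    · exact Set.disjoint_left.mp hd ⟨a, ha, c, hci, rfl⟩ ⟨c, hc, a, haj, Sym2.eq_swap⟩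
  -- Finset counting
  let d : Fin (k+1) → Finset (Fin (k+1)) := fun j => Finset.univ.filter (fun i => R i j)
  have hcard : ∀ j, {i : Fin (k+1) | R i j}.ncard = (d j).card := by
    intro j
    have : {i : Fin (k+1) | R i j} = ↑(d j) := by ext i; simp [d]
    rw [this, Set.ncard_coe_finset]
  let P : Finset (Fin (k+1) × Fin (k+1)) := Finset.univ.filter (fun p => R p.1 p.2)
  have hPsum : P.card = ∑ j : Fin (k+1), (d j).card := by
    rw [Finset.card_eq_sum_card_fiberwise (f := Prod.snd) (t := Finset.univ)
      (fun x _ => Finset.mem_univ _)]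
    refine Finset.sum_congr rfl fun j _ => ?_
    refine Finset.card_bij (fun p _ => p.1) ?_ ?_ ?_
    · rintro p hp
      simp only [P, Finset.mem_filter] at hp
      simp only [d, Finset.mem_filter, Finset.mem_univ, true_and]
      rcases hp with ⟨⟨-, hr⟩, hs⟩
      rwa [hs] at hr
    · rintro p hp q hq hpq
      simp only [P, Finset.mem_filter] at hp hq
      exact Prod.ext hpq (hp.2.trans hq.2.symm)
    · intro i hi
      simp only [d, Finset.mem_filter, Finset.mem_univ, true_and] at hi
      exact ⟨(i, j), Finset.mem_filter.mpr ⟨Finset.mem_filter.mpr ⟨Finset.mem_univ _, hi⟩, rfl⟩, rfl⟩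
  -- upper bound on P.card
  have hsub : P ∪ P.image Prod.swap ⊆ Finset.univ.offDiag := by
    intro p hp
    rcases Finset.mem_union.mp hp with hp | hp
    · simp only [P, Finset.mem_filter] at hp
      simp [Finset.mem_offDiag, hp.2.1]
    · obtain ⟨q, hq, rfl⟩ := Finset.mem_image.mp hp
      simp only [P, Finset.mem_filter] at hq
      simp [Finset.mem_offDiag, Ne.symm hq.2.1]
  have hdisjP : Disjoint P (P.image Prod.swap) := by
    rw [Finset.disjoint_left]
    intro p hp hp'
    obtain ⟨q, hq, hqs⟩ := Finset.mem_image.mp hp'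
    simp only [P, Finset.mem_filter] at hp hq
    have : q = p.swap := by rw [← hqs, Prod.swap_swap]
    subst this
    exact antisym p.1 p.2 hp.2 hq.2
  have himg : (P.image Prod.swap).card = P.card :=
    Finset.card_image_of_injective _ Prod.swap_injective
  have hub : 2 * P.card ≤ (k+1) * k := by
    have h1 : (P ∪ P.image Prod.swap).card = 2 * P.card := by
      rw [Finset.card_union_of_disjoint hdisjP, himg]; ring
    have h2 := Finset.card_le_card hsub
    rw [h1] at h2
    have h3 : (Finset.univ : Finset (Fin (k+1))).offDiag.card = (k+1)*k := by
      rw [Finset.offDiag_card]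
      simp [Nat.mul_succ]
    rw [h3] at h2
    exact h2
  -- lower bound
  have hlb : (k+1) * (k+1) ≤ 2 * P.card := by
    rw [hPsum, Finset.mul_sum]
    calc (k+1) * (k+1) = ∑ _j : Fin (k+1), (k+1) := by simp [mul_comm]
    _ ≤ ∑ j : Fin (k+1), 2 * (d j).card := by
        refine Finset.sum_le_sum fun j _ => ?_
        have := hcon j
        rw [hcard j] at this
        omega
  have : (k+1)*(k+1) ≤ (k+1)*k := hlb.trans hub
  nlinarith
end

section
/- Let G be a graph whose edge set is partitioned into k+1 edge-disjoint complete bipartite graphs H_1, ..., H_{k+1}. Then there exists an index j and a part S ∈ {A_j, B_j} of H_j such that the induced subgraph G[S] admits a partition of its edge set into at most ⌊k/4⌋ complete bipartite graphs. -/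
section aux

variable {V : Type*} {n : ℕ} {A B : Fin n → Set V}

lemma cross1 (hpair : (Set.univ : Set (Fin n)).PairwiseDisjoint
      (fun i => bicliqueEdges (A i) (B i)))
    {i j : Fin n} (hij : i ≠ j) {a b : V} (ha : a ∈ A i) (hb : b ∈ B i)
    (haj : a ∈ A j) (hbj : b ∈ B j) : False := by
  have h := hpair (Set.mem_univ i) (Set.mem_univ j) hij
  exact Set.disjoint_left.mp h ⟨a, ha, b, hb, rfl⟩ ⟨a, haj, b, hbj, rfl⟩

lemma cross2 (hpair : (Set.univ : Set (Fin n)).PairwiseDisjoint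
      (fun i => bicliqueEdges (A i) (B i)))
    {i j : Fin n} (hij : i ≠ j) {a b : V} (ha : a ∈ A i) (hb : b ∈ B i)
    (hbj : b ∈ A j) (haj : a ∈ B j) : False := by
  have h := hpair (Set.mem_univ i) (Set.mem_univ j) hij
  exact Set.disjoint_left.mp h ⟨a, ha, b, hb, rfl⟩ ⟨b, hbj, a, haj, Sym2.eq_swap⟩

/-- The restriction construction: if `T` is the set of indices whose biclique has an
edge inside `S`, `H j` has no edge inside `S`, and `T.card ≤ m`, then `G[S]` has a
biclique partition of size `m`. -/
lemma construct (G : SimpleGraph V)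
    (hdisj : ∀ i, Disjoint (A i) (B i))
    (hpair : (Set.univ : Set (Fin n)).PairwiseDisjoint
      (fun i => bicliqueEdges (A i) (B i)))
    (hcover : (⋃ i, bicliqueEdges (A i) (B i)) = G.edgeSet)
    (S : Set V) (j : Fin n)
    (hSj : ∀ a b : V, a ∈ A j → b ∈ B j → a ∈ S → b ∈ S → False)
    (m : ℕ) (T : Finset (Fin n))
    (hT : ∀ i, i ∈ T ↔ i ≠ j ∧ (A i ∩ S).Nonempty ∧ (B i ∩ S).Nonempty)
    (hcard : T.card ≤ m) :
    HasBicliquePartition (G.induce S) m := by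
  classical
  obtain ⟨ι⟩ : Nonempty (↥T ↪ Fin m) := by
    apply Function.Embedding.nonempty_of_card_le
    simpa using hcard
  set f : Fin m → Set V × Set V := fun m' =>
    if h : ∃ i : T, ι i = m' then (A h.choose, B h.choose) else (∅, ∅) with hf
  refine ⟨fun m' => Subtype.val ⁻¹' (f m').1, fun m' => Subtype.val ⁻¹' (f m').2,
    ?_, ?_, ?_⟩
  · intro m'
    by_cases h : ∃ i : T, ι i = m'
    · simp only [hf]; rw [dif_pos h]
      exact (hdisj _).preimage _
    · simp only [hf]; rw [dif_neg h]
      simp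
  · intro m1 _ m2 _ hne
    simp only [Set.disjoint_left]
    rintro e ⟨a, ha, b, hb, rfl⟩ ⟨c, hc, d, hd, hcd⟩
    by_cases h1 : ∃ i : T, ι i = m1
    swap
    · simp only [hf] at ha; rw [dif_neg h1] at ha; simpa using ha
    by_cases h2 : ∃ i : T, ι i = m2
    swap
    · simp only [hf] at hc; rw [dif_neg h2] at hc; simpa using hc
    simp only [hf] at ha hb hc hd
    rw [dif_pos h1] at ha hb
    rw [dif_pos h2] at hc hd
    have hne' : (h1.choose : Fin n) ≠ (h2.choose : Fin n) := by
      intro hcontra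
      apply hne
      rw [← h1.choose_spec, ← h2.choose_spec]
      congr 1
      exact Subtype.ext hcontra
    have hmap : s(a.val, b.val) = s(c.val, d.val) := by
      have := congrArg (Sym2.map Subtype.val) hcd
      simpa using this
    rcases Sym2.eq_iff.mp hmap with ⟨hac, hbd⟩ | ⟨had, hbc⟩
    · exact cross1 hpair hne' ha hb (by rw [hac]; exact hc) (by rw [hbd]; exact hd)
    · exact cross2 hpair hne' ha hb (by rw [hbc]; exact hc) (by rw [had]; exact hd)
  · ext e
    constructor
    · rintro he
      simp only [Set.mem_iUnion] at he
      obtain ⟨m', a, ha, b, hb, rfl⟩ := he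
      by_cases h : ∃ i : T, ι i = m'
      swap
      · simp only [hf] at ha; rw [dif_neg h] at ha; simpa using ha
      simp only [hf] at ha hb
      rw [dif_pos h] at ha hb
      have : s(a.val, b.val) ∈ G.edgeSet := by
        rw [← hcover]
        exact Set.mem_iUnion.mpr ⟨h.choose, a.val, ha, b.val, hb, rfl⟩
      rw [SimpleGraph.mem_edgeSet] at this
      rw [SimpleGraph.mem_edgeSet]
      simpa using this
    · intro he
      induction e using Sym2.ind with
      | _ x y =>
      rw [SimpleGraph.mem_edgeSet] at he
      have hadj : G.Adj x.val y.val := by simpa using he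
      have hmem : s(x.val, y.val) ∈ ⋃ i, bicliqueEdges (A i) (B i) := by
        rw [hcover]; exact hadj
      simp only [Set.mem_iUnion] at hmem
      obtain ⟨i, a, ha, b, hb, heq⟩ := hmem
      -- WLOG reduce to the case x.val ∈ A i, y.val ∈ B i  (possibly swapping x,y)
      have main : ∀ (x y : S), x.val ∈ A i → y.val ∈ B i →
          s(x, y) ∈ ⋃ m', bicliqueEdges
            (Subtype.val ⁻¹' (f m').1) (Subtype.val ⁻¹' (f m').2) := by
        intro x y hx hy
        have hiT : i ∈ T := by
          rw [hT]
          refine ⟨?_, ⟨x.val, hx, x.2⟩, ⟨y.val, hy, y.2⟩⟩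
          rintro rfl
          exact hSj x.val y.val hx hy x.2 y.2
        set m' := ι ⟨i, hiT⟩ with hm'
        have h : ∃ i' : T, ι i' = m' := ⟨⟨i, hiT⟩, rfl⟩
        have hch : h.choose = ⟨i, hiT⟩ := ι.injective h.choose_spec
        refine Set.mem_iUnion.mpr ⟨m', x, ?_, y, ?_, rfl⟩
        · simp only [hf]; rw [dif_pos h, hch]
          exact hx
        · simp only [hf]; rw [dif_pos h, hch]
          exact hy
      rcases Sym2.eq_iff.mp heq with ⟨h1, h2⟩ | ⟨h1, h2⟩
      · exact main x y (h1 ▸ ha) (h2 ▸ hb)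
      · have := main y x (h2 ▸ ha) (h1 ▸ hb)
        rwa [Sym2.eq_swap] at this
end aux

/-- If `E(G)` is partitioned into `k+1` complete bipartite graphs with parts
`A i`, `B i`, then there is an index `j` and a part `S ∈ {A j, B j}` such that `G[S]`
admits a partition of its edge set into at most `⌊k/4⌋` complete bipartite graphs. -/
theorem stmt_14 {V : Type*} [Fintype V] (G : SimpleGraph V) (k : ℕ)
    (A B : Fin (k + 1) → Set V)
    (hdisj : ∀ i, Disjoint (A i) (B i))
    (hpair : (Set.univ : Set (Fin (k + 1))).PairwiseDisjoint
      (fun i => bicliqueEdges (A i) (B i)))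
    (hcover : (⋃ i, bicliqueEdges (A i) (B i)) = G.edgeSet) :
    ∃ j : Fin (k + 1),
      HasBicliquePartition (G.induce (A j)) (k / 4) ∨
        HasBicliquePartition (G.induce (B j)) (k / 4) := by
  classical
  set T : Fin (k+1) → Set V → Finset (Fin (k+1)) := fun j S =>
    Finset.univ.filter (fun i => i ≠ j ∧ (A i ∩ S).Nonempty ∧ (B i ∩ S).Nonempty) with hTdef
  -- the key counting claim
  have key : ∃ j : Fin (k+1), (T j (A j)).card ≤ k / 4 ∨ (T j (B j)).card ≤ k / 4 := by
    by_contra hcon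
    push_neg at hcon
    set t : Fin (k+1) → Fin (k+1) → ℕ := fun i j =>
      (if i ≠ j ∧ (A i ∩ A j).Nonempty ∧ (B i ∩ A j).Nonempty then 1 else 0) +
      (if i ≠ j ∧ (A i ∩ B j).Nonempty ∧ (B i ∩ B j).Nonempty then 1 else 0) with ht
    have sum_eq : ∀ j : Fin (k+1),
        (T j (A j)).card + (T j (B j)).card = ∑ i, t i j := by
      intro j
      rw [hTdef]
      simp only [Finset.card_filter]
      rw [← Finset.sum_add_distrib]
    -- lower bound on total
    have lower : (k+1) * (2 * (k/4) + 2) ≤ ∑ j, ∑ i, t i j := by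
      calc (k+1) * (2 * (k/4) + 2) = ∑ _j : Fin (k+1), (2 * (k/4) + 2) := by
            simp [Finset.sum_const, mul_comm]
        _ ≤ ∑ j, ∑ i, t i j := by
            apply Finset.sum_le_sum
            intro j _
            rw [← sum_eq j]
            have h1 := hcon j
            omega
    -- each unordered pair contributes at most 1
    have pairbd : ∀ i j : Fin (k+1), t i j + t j i ≤ if i = j then 0 else 1 := by
      intro i j
      by_cases hij : i = j
      · subst hij; simp [ht]
      · have hij' : i ≠ j := hij
        have hji : j ≠ i := Ne.symm hij
        rw [if_neg hij]
        simp only [ht]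
        by_cases h1 : i ≠ j ∧ (A i ∩ A j).Nonempty ∧ (B i ∩ A j).Nonempty
        · obtain ⟨a, haA, haA'⟩ := h1.2.1
          obtain ⟨b, hbB, hbA'⟩ := h1.2.2
          have e2 : ¬(i ≠ j ∧ (A i ∩ B j).Nonempty ∧ (B i ∩ B j).Nonempty) := by
            rintro ⟨-, -, ⟨d, hdB, hdB'⟩⟩
            exact cross1 hpair hij' haA hdB haA' hdB'
          have e3 : ¬(j ≠ i ∧ (A j ∩ A i).Nonempty ∧ (B j ∩ A i).Nonempty) := by
            rintro ⟨-, -, ⟨d, hdB', hdA⟩⟩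
            exact cross2 hpair hij' hdA hbB hbA' hdB'
          have e4 : ¬(j ≠ i ∧ (A j ∩ B i).Nonempty ∧ (B j ∩ B i).Nonempty) := by
            rintro ⟨-, -, ⟨d, hdB', hdB⟩⟩
            exact cross1 hpair hij' haA hdB haA' hdB'
          rw [if_pos h1, if_neg e2, if_neg e3, if_neg e4]
        · by_cases h2 : i ≠ j ∧ (A i ∩ B j).Nonempty ∧ (B i ∩ B j).Nonempty
          · obtain ⟨a, haA, haB'⟩ := h2.2.1
            obtain ⟨b, hbB, hbB'⟩ := h2.2.2
            have e3 : ¬(j ≠ i ∧ (A j ∩ A i).Nonempty ∧ (B j ∩ A i).Nonempty) := by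
              rintro ⟨-, ⟨c, hcA', hcA⟩, -⟩
              exact cross1 hpair hji hcA' hbB' hcA hbB
            have e4 : ¬(j ≠ i ∧ (A j ∩ B i).Nonempty ∧ (B j ∩ B i).Nonempty) := by
              rintro ⟨-, ⟨c, hcA', hcB⟩, -⟩
              exact cross2 hpair hji hcA' haB' haA hcB
            rw [if_neg h1, if_pos h2, if_neg e3, if_neg e4]
          · by_cases h3 : j ≠ i ∧ (A j ∩ A i).Nonempty ∧ (B j ∩ A i).Nonempty
            · obtain ⟨c, hcA', hcA⟩ := h3.2.1
              have e4 : ¬(j ≠ i ∧ (A j ∩ B i).Nonempty ∧ (B j ∩ B i).Nonempty) := by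
                rintro ⟨-, -, ⟨b, hbB', hbB⟩⟩
                exact cross1 hpair hji hcA' hbB' hcA hbB
              rw [if_neg h1, if_neg h2, if_pos h3, if_neg e4]
            · rw [if_neg h1, if_neg h2, if_neg h3]
              split <;> omega
    -- upper bound on total
    have upper : 2 * (∑ j, ∑ i, t i j) ≤ (k+1) * k := by
      have swap : ∑ j : Fin (k+1), ∑ i : Fin (k+1), t j i
          = ∑ j : Fin (k+1), ∑ i : Fin (k+1), t i j := Finset.sum_comm
      have step : (∑ j : Fin (k+1), ∑ i : Fin (k+1), (t i j + t j i))
          = 2 * (∑ j, ∑ i, t i j) := by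
        calc ∑ j : Fin (k+1), ∑ i : Fin (k+1), (t i j + t j i)
            = ∑ j : Fin (k+1), ((∑ i : Fin (k+1), t i j) + (∑ i : Fin (k+1), t j i)) :=
              Finset.sum_congr rfl fun j _ => Finset.sum_add_distrib
          _ = (∑ j : Fin (k+1), ∑ i : Fin (k+1), t i j)
              + (∑ j : Fin (k+1), ∑ i : Fin (k+1), t j i) := Finset.sum_add_distrib
          _ = 2 * (∑ j, ∑ i, t i j) := by rw [swap]; ring
      rw [← step]
      calc ∑ j : Fin (k+1), ∑ i : Fin (k+1), (t i j + t j i)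
          ≤ ∑ j : Fin (k+1), ∑ i : Fin (k+1), (if i = j then 0 else 1) := by
            apply Finset.sum_le_sum; intro j _
            apply Finset.sum_le_sum; intro i _
            exact pairbd i j
        _ = (k+1) * k := by
            have inner : ∀ j : Fin (k+1),
                ∑ i : Fin (k+1), (if i = j then (0:ℕ) else 1) = k := by
              intro j
              have h1 : ∑ i : Fin (k+1), ((if i = j then (0:ℕ) else 1) + (if i = j then 1 else 0))
                  = k + 1 := by
                have he : ∀ i : Fin (k+1),
                    ((if i = j then (0:ℕ) else 1) + (if i = j then 1 else 0)) = 1 := by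
                  intro i; split <;> rfl
                rw [Finset.sum_congr rfl fun i _ => he i]
                simp
              rw [Finset.sum_add_distrib] at h1
              have h2 : ∑ i : Fin (k+1), (if i = j then (1:ℕ) else 0) = 1 := by
                simp
              omega
            rw [Finset.sum_congr rfl (fun j _ => inner j)]
            simp [mul_comm]
    -- combine
    have hle : (k+1) * (4 * (k/4) + 4) ≤ (k+1) * k := by
      calc (k+1) * (4 * (k/4) + 4) = 2 * ((k+1) * (2 * (k/4) + 2)) := by ring
        _ ≤ 2 * (∑ j, ∑ i, t i j) := by
            exact Nat.mul_le_mul_left 2 lower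
        _ ≤ (k+1) * k := upper
    have := Nat.le_of_mul_le_mul_left hle (Nat.succ_pos k)
    omega
  obtain ⟨j, hj⟩ := key
  refine ⟨j, ?_⟩
  rcases hj with hj | hj
  · left
    refine construct G hdisj hpair hcover (A j) j ?_ (k/4) (T j (A j)) ?_ hj
    · intro a b _ hbB haS hbS
      exact Set.disjoint_left.mp (hdisj j) hbS hbB
    · intro i
      rw [hTdef]
      simp
  · right
    refine construct G hdisj hpair hcover (B j) j ?_ (k/4) (T j (B j)) ?_ hj
    · intro a b haA _ haS _
      exact Set.disjoint_left.mp (hdisj j) haA haS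
    · intro i
      rw [hTdef]
      simp
end
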